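/- The uplink SINR with quantized weighted signals is strictly decreasing in the normalized quantization distortion: fix positive integers M, N, K and k ∈ {1,…,K}, reals ρ > 0, positive matrices β, γ ∈ ℝ^{M×K} with 2β_{mk} ≥ γ_{mk} for all m, nonnegative pilot correlations π_{kk'}, nonnegative powers q ∈ ℝ^K, and nonnegative coefficients u_{1k},…,u_{Mk} with Σ_m u_{mk} γ_{mk} > 0 and q_k > 0. Then the map r ↦ SINR_k^UP(U,q) (with r = σ_ė²/ȧ² appearing in the SINR formula) is strictly decreasing on [0,∞). Consequently the achievable user rate is monotonically increasing in the quantization resolution (equivalently, in the capacity of the fronthaul links), so the optimum of Problem P1 is attained when each fronthaul constraint holds with equality, C_m = C_fh. -/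

import Mathlib

/-! The numerator of the SINR does not depend on `r`, and in the denominator `r` enters only
through the thermal-noise factor `r + 1` and the distortion gains `r (2β - γ) + γ`. Since
`2β ≥ γ`, the denominator is a positive, strictly increasing function of `r ≥ 0`. -/

open Finset

/-- The uplink SINR of user `k` with quantized weighted signals, as a function of the
normalized quantization distortion `r = σ_ė²/ȧ²` (equation (38) of the paper). -/
noncomputable def SINRofR {M K : ℕ} (N : ℕ) (ρ : ℝ)
    (β γ u : Matrix (Fin M) (Fin K) ℝ) (π : Fin K → Fin K → ℝ)
    (q : Fin K → ℝ) (k : Fin K) (r : ℝ) : ℝ :=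
  (N : ℝ) ^ 2 * q k * (∑ m, u m k * γ m k) ^ 2 /
    ((N : ℝ) ^ 2 * ∑ k' ∈ Finset.univ.erase k,
        q k' * π k k' * (∑ m, u m k * γ m k * β m k' / β m k) ^ 2 +
      (N : ℝ) * ∑ k', q k' * ∑ m, (u m k) ^ 2 * β m k' *
        (r * (2 * β m k - γ m k) + γ m k) +
      (N : ℝ) / ρ * (r + 1) * ∑ m, (u m k) ^ 2 * γ m k)

theorem StrictMonoOn.const_div_strictAntiOn {α 𝕜 : Type*} [Preorder α] [Field 𝕜]
    [LinearOrder 𝕜] [IsStrictOrderedRing 𝕜] {s : Set α} {f : α → 𝕜} {c : 𝕜} (hc : 0 < c)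
    (hf : StrictMonoOn f s) (hpos : ∀ x ∈ s, 0 < f x) :
    StrictAntiOn (fun x ↦ c / f x) s :=
  fun _ ha _ hb hab ↦ div_lt_div_of_pos_left hc (hpos _ ha) (hf ha hb hab)

theorem Finset.sum_sq_mul_pos_of_sum_mul_pos {ι R : Type*} [Ring R] [LinearOrder R]
    [IsStrictOrderedRing R] {s : Finset ι} {u γ : ι → R}
    (hγ : ∀ i ∈ s, 0 < γ i) (h : 0 < ∑ i ∈ s, u i * γ i) :
    0 < ∑ i ∈ s, u i ^ 2 * γ i := by
  obtain ⟨i, hi, hne⟩ := exists_ne_zero_of_sum_ne_zero h.ne'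
  have hui : u i ≠ 0 := left_ne_zero_of_mul hne
  exact sum_pos' (fun j hj ↦ mul_nonneg (sq_nonneg _) (hγ j hj).le)
    ⟨i, hi, mul_pos (pow_two_pos_of_ne_zero hui) (hγ i hi)⟩

theorem sinr_strictAnti_in_quantization_distortion_general
    {M K : ℕ} (N : ℕ) (hN : 0 < N)
    (ρ : ℝ) (hρ : 0 < ρ)
    (β γ u : Matrix (Fin M) (Fin K) ℝ)
    (hβ : ∀ m k, 0 < β m k) (hγ : ∀ m k, 0 < γ m k)
    (hβγ : ∀ m k, γ m k ≤ 2 * β m k)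
    (π : Fin K → Fin K → ℝ) (hπ : ∀ k k', 0 ≤ π k k')
    (q : Fin K → ℝ) (hq : ∀ k', 0 ≤ q k')
    (k : Fin K)
    (huγ : 0 < ∑ m, u m k * γ m k) (hqk : 0 < q k) :
    StrictAntiOn (SINRofR N ρ β γ u π q k) (Set.Ici (0 : ℝ)) := by
  have hnoise : 0 < ∑ m, u m k ^ 2 * γ m k :=
    sum_sq_mul_pos_of_sum_mul_pos (fun m _ ↦ hγ m k) huγ
  have hpilot : 0 ≤ ∑ k' ∈ univ.erase k,
      q k' * π k k' * (∑ m, u m k * γ m k * β m k' / β m k) ^ 2 :=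
    sum_nonneg fun k' _ ↦ mul_nonneg (mul_nonneg (hq k') (hπ k k')) (sq_nonneg _)
  have hslope : ∀ m, 0 ≤ 2 * β m k - γ m k := fun m ↦ sub_nonneg.2 (hβγ m k)
  refine StrictMonoOn.const_div_strictAntiOn (by positivity)
    (fun a ha b hb hab ↦ ?_) fun r hr ↦ ?_
  · refine add_lt_add_of_le_of_lt ?_ (by gcongr)
    gcongr with k' _ m _
    exacts [hq k', mul_nonneg (sq_nonneg _) (hβ m k').le, hslope m]
  · have hr : 0 ≤ r := hr
    have hdistortion : 0 ≤ ∑ k', q k' * ∑ m,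
        u m k ^ 2 * β m k' * (r * (2 * β m k - γ m k) + γ m k) :=
      sum_nonneg fun k' _ ↦ mul_nonneg (hq k') <| sum_nonneg fun m _ ↦
        mul_nonneg (mul_nonneg (sq_nonneg _) (hβ m k').le)
          (add_nonneg (mul_nonneg hr (hslope m)) (hγ m k).le)
    positivity

/-- The uplink SINR with quantized weighted signals is strictly decreasing in the
normalized quantization distortion `r = σ_ė²/ȧ²` on `[0, ∞)`; consequently the
achievable rate is monotonically increasing in the quantization resolution, so the
optimum of Problem P1 is attained with the fronthaul constraints active. -/
theorem sinr_strictAnti_in_quantization_distortion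
    {M K : ℕ} (hM : 0 < M) (hK : 0 < K) (N : ℕ) (hN : 0 < N)
    (ρ : ℝ) (hρ : 0 < ρ)
    (β γ u : Matrix (Fin M) (Fin K) ℝ)
    (hβ : ∀ m k, 0 < β m k) (hγ : ∀ m k, 0 < γ m k)
    (hβγ : ∀ m k, γ m k ≤ 2 * β m k)
    (π : Fin K → Fin K → ℝ) (hπ : ∀ k k', 0 ≤ π k k')
    (q : Fin K → ℝ) (hq : ∀ k', 0 ≤ q k')
    (k : Fin K) (hu : ∀ m, 0 ≤ u m k)
    (huγ : 0 < ∑ m, u m k * γ m k) (hqk : 0 < q k) :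
    StrictAntiOn (SINRofR N ρ β γ u π q k) (Set.Ici (0 : ℝ)) :=
  sinr_strictAnti_in_quantization_distortion_general N hN ρ hρ β γ u hβ hγ hβγ π hπ q hq k huγ hqk
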